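/- arXiv:2311.03559 — 2 statements merged into one kernel-verified Lean document; each statement's English description precedes it below -/
import Mathlib

section
/- Let V be a set with binary operations ⊕ (associative, commutative, identity 0) and ⊗ (identity 1). Suppose that for all 2×2-shaped data of the specific form v = (x, 0) (a row vector over keys {a,b}), E_out = row (y, 0), E_in = row (1, 1), the identity (v ⊕.⊗ E_outᵀ) ⊕.⊗ E_in = (E_inᵀ ⊕.⊗ (E_out ⊕.⊗ vᵀ))ᵀ holds, where 0 annihilates under ⊗. Then ⊗ is commutative. -/
/-- The array product `(A ⊕.⊗ B)(i,k) = ⊕_j A(i,j) ⊗ B(j,k)`. -/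
def aprod {V : Type*} (add mul : V → V → V) (zero : V) {m n p : ℕ}
    (A : Fin m → Fin n → V) (B : Fin n → Fin p → V) : Fin m → Fin p → V :=
  fun i k => (List.ofFn (fun j => mul (A i j) (B j k))).foldr add zero

/-- Transpose of an array. -/
def atrans {V : Type*} {m n : ℕ} (A : Fin m → Fin n → V) : Fin n → Fin m → V :=
  fun j i => A i j

theorem stmt_8 {V : Type*} (add mul : V → V → V) (zero one : V)
    (haddassoc : ∀ u v w, add (add u v) w = add u (add v w))
    (haddcomm : ∀ v w, add v w = add w v)
    (haddid : ∀ v, add zero v = v ∧ add v zero = v)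
    (hmulid : ∀ v, mul one v = v ∧ mul v one = v)
    (hann : ∀ v, mul zero v = zero ∧ mul v zero = zero)
    (h : ∀ x y : V,
      aprod add mul zero
          (aprod add mul zero (![![x, zero]]) (atrans ![![y, zero]]))
          ![![one, one]] =
        atrans (aprod add mul zero (atrans ![![one, one]])
          (aprod add mul zero ![![y, zero]] (atrans ![![x, zero]])))) :
    ∀ x y : V, mul x y = mul y x := by
  intro x y
  have := congrFun (congrFun (h x y) 0) 0
  simp [aprod, atrans, List.ofFn, Fin.foldr, Fin.foldr.loop, (haddid _).1, (haddid _).2,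
    (hmulid _).1, (hmulid _).2, (hann _).1, (hann _).2] at this
  exact this
end

section
/- Let V be a set with ⊕ associative and commutative with identity 0, ⊗ with identity 1, and 0 an annihilator for ⊗. Suppose that for all u, v, w ∈ V, taking the row vector v⃗ = (u, 0) over keys {a,b}, and 1×2 matrices E_out = (v, 1), E_in = (w, 0) indexed by the single hyperedge k, we have (v⃗ ⊕.⊗ E_outᵀ) ⊕.⊗ E_in = v⃗ ⊕.⊗ (E_outᵀ ⊕.⊗ E_in). Then ⊗ is associative. -/
theorem stmt_9 {V : Type*} (add mul : V → V → V) (zero one : V)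
    (haddassoc : ∀ u v w, add (add u v) w = add u (add v w))
    (haddcomm : ∀ v w, add v w = add w v)
    (haddid : ∀ v, add zero v = v ∧ add v zero = v)
    (hmulid : ∀ v, mul one v = v ∧ mul v one = v)
    (hann : ∀ v, mul zero v = zero ∧ mul v zero = zero)
    (h : ∀ u v w : V,
      aprod add mul zero
          (aprod add mul zero (![![u, zero]]) (atrans ![![v, one]]))
          ![![w, zero]] =
        aprod add mul zero (![![u, zero]])
          (aprod add mul zero (atrans ![![v, one]]) ![![w, zero]])) :
    ∀ u v w : V, mul (mul u v) w = mul u (mul v w) := by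
  intro u v w
  have := congrFun (congrFun (h u v w) 0) 0
  simp [aprod, atrans, List.ofFn_succ] at this
  simpa [(haddid _).2, (hann _).1, (hann _).2, (hmulid _).1, (hmulid _).2] using this
end
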